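/- arXiv:math/9207207 — 4 statements merged into one kernel-verified Lean document; each statement's English description precedes it below -/
import Mathlib

section
/- Let K be a compact metric space, ε₀ > 0, and let (f_n) be a bounded sequence in C(K) (real-valued). Suppose there exist subsets A_n = {k ∈ K : f_n(k) > ε₀} and B_n = {k ∈ K : |f_n(k)| < δ} with δ < ε₀, and suppose the sequence of pairs (A_n, B_n) is independent, i.e., for every pair of disjoint finite subsets I, J of ℕ the set (⋂_{n∈I} A_n) ∩ (⋂_{n∈J} B_n) is nonempty. Then (f_n) is equivalent to the unit vector basis of ℓ₁; in fact for all finitely supported scalars (a_j), ‖Σ a_j f_j‖_∞ ≥ ((ε₀ - δ)/2 - δ) · Σ |a_j| (for appropriate constants), so in particular if δ is small enough there is c > 0 with ‖Σ a_j f_j‖ ≥ c Σ|a_j|. -/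
open Filter

/-- An independent sequence of pairs `(A_n, B_n)` with `A_n = {f_n > ε₀}`,
`B_n = {|f_n| < δ}` makes `(f_n)` equivalent to the `ℓ₁`-basis. -/
theorem independent_pairs_give_ell_one
    (K : Type*) [MetricSpace K] [CompactSpace K]
    (f : ℕ → C(K, ℝ)) (M : ℝ) (hM : ∀ n, ‖f n‖ ≤ M)
    (ε₀ δ : ℝ) (hε₀ : 0 < ε₀) (hδ : δ < ε₀)
    (hindep : ∀ I J : Finset ℕ, Disjoint I J →
      ∃ k : K, (∀ n ∈ I, ε₀ < f n k) ∧ (∀ n ∈ J, |f n k| < δ)) :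
    (∀ (s : Finset ℕ) (a : ℕ → ℝ),
      ((ε₀ - δ) / 2 - δ) * ∑ j ∈ s, |a j| ≤ ‖∑ j ∈ s, a j • f j‖) ∧
    (0 < (ε₀ - δ) / 2 - δ →
      ∃ c > 0, ∀ (s : Finset ℕ) (a : ℕ → ℝ),
        c * ∑ j ∈ s, |a j| ≤ ‖∑ j ∈ s, a j • f j‖) := by
  have hδ0 : 0 ≤ δ := by
    by_contra h
    push_neg at h
    obtain ⟨k, -, hB⟩ := hindep ∅ {0} (by simp)
    have hb := hB 0 (by simp)
    have hn := abs_nonneg (f 0 k)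
    linarith
  have key : ∀ (s : Finset ℕ) (a : ℕ → ℝ),
      ((ε₀ - δ) / 2) * ∑ j ∈ s, |a j| ≤ ‖∑ j ∈ s, a j • f j‖ := by
    intro s a
    set g : C(K, ℝ) := ∑ j ∈ s, a j • f j with hg
    set P := s.filter (fun j => 0 ≤ a j) with hP
    set N := s.filter (fun j => ¬ 0 ≤ a j) with hN
    have hPN : Disjoint P N := by
      rw [Finset.disjoint_left]
      intro j hj hj'
      rw [hP, Finset.mem_filter] at hj
      rw [hN, Finset.mem_filter] at hj'
      exact hj'.2 hj.2
    obtain ⟨k₁, hA₁, hB₁⟩ := hindep P N hPN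
    obtain ⟨k₂, hA₂, hB₂⟩ := hindep N P hPN.symm
    have hgk : ∀ k : K, g k = ∑ j ∈ P, a j * f j k + ∑ j ∈ N, a j * f j k := by
      intro k
      have : g k = ∑ j ∈ s, a j * f j k := by simp [hg]
      rw [this, hP, hN, Finset.sum_filter_add_sum_filter_not]
    have hsplit : ∑ j ∈ s, |a j| = ∑ j ∈ P, |a j| + ∑ j ∈ N, |a j| := by
      rw [hP, hN, Finset.sum_filter_add_sum_filter_not]
    have h1 : ε₀ * ∑ j ∈ P, |a j| - δ * ∑ j ∈ N, |a j| ≤ g k₁ := by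
      have e1 : ∑ j ∈ P, ε₀ * |a j| ≤ ∑ j ∈ P, a j * f j k₁ := by
        refine Finset.sum_le_sum fun j hj => ?_
        have ha : 0 ≤ a j := (Finset.mem_filter.1 hj).2
        have hf := hA₁ j hj
        rw [abs_of_nonneg ha]; nlinarith
      have e2 : ∑ j ∈ N, -(δ * |a j|) ≤ ∑ j ∈ N, a j * f j k₁ := by
        refine Finset.sum_le_sum fun j hj => ?_
        have ha : a j < 0 := not_le.1 (Finset.mem_filter.1 hj).2
        have hf := abs_lt.1 (hB₁ j hj)
        rw [abs_of_neg ha]; nlinarith [hf.1, hf.2]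
      rw [← Finset.mul_sum] at e1
      rw [Finset.sum_neg_distrib, ← Finset.mul_sum] at e2
      rw [hgk k₁]; linarith
    have h2 : g k₂ ≤ δ * ∑ j ∈ P, |a j| - ε₀ * ∑ j ∈ N, |a j| := by
      have e1 : ∑ j ∈ P, a j * f j k₂ ≤ ∑ j ∈ P, δ * |a j| := by
        refine Finset.sum_le_sum fun j hj => ?_
        have ha : 0 ≤ a j := (Finset.mem_filter.1 hj).2
        have hf := abs_lt.1 (hB₂ j hj)
        rw [abs_of_nonneg ha]; nlinarith [hf.1, hf.2]
      have e2 : ∑ j ∈ N, a j * f j k₂ ≤ ∑ j ∈ N, -(ε₀ * |a j|) := by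
        refine Finset.sum_le_sum fun j hj => ?_
        have ha : a j < 0 := not_le.1 (Finset.mem_filter.1 hj).2
        have hf := hA₂ j hj
        rw [abs_of_neg ha]; nlinarith
      rw [← Finset.mul_sum] at e1
      rw [Finset.sum_neg_distrib, ← Finset.mul_sum] at e2
      rw [hgk k₂]; linarith
    have hn1 : g k₁ ≤ ‖g‖ := le_trans (le_abs_self _) (g.norm_coe_le_norm k₁)
    have hn2 : -‖g‖ ≤ g k₂ := neg_le_of_abs_le (g.norm_coe_le_norm k₂)
    nlinarith [hsplit]
  refine ⟨fun s a => ?_, fun hc => ⟨(ε₀ - δ) / 2 - δ, hc, fun s a => ?_⟩⟩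
  · refine le_trans ?_ (key s a)
    have hsum : (0:ℝ) ≤ ∑ j ∈ s, |a j| := Finset.sum_nonneg fun j _ => abs_nonneg _
    nlinarith
  · refine le_trans ?_ (key s a)
    have hsum : (0:ℝ) ≤ ∑ j ∈ s, |a j| := Finset.sum_nonneg fun j _ => abs_nonneg _
    nlinarith
end

section
/- Let g : S_X → ℝ be a Lipschitz function on the unit sphere of a Banach space X, let (L_n) be a sequence of finite-dimensional subspaces with dim L_n → ∞, and let δ_n ↓ 0. Assume the First Stabilization Principle: for every C, ε, k there is n(C,ε,k) such that every C-Lipschitz function on an n-dimensional normed space has a k-dimensional subspace on whose unit sphere its oscillation is < ε. Then there exist a large refinement (L̃_n) of (L_n) and a constant c ∈ ℝ such that |g(y) - c| < δ_n for all n and all y ∈ S_{L̃_n}. -/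
open Filter Module

/-- Stabilizing a Lipschitz function on a large sequence of finite-dimensional
subspaces, assuming the First Stabilization Principle. -/
theorem stabilize_lipschitz_on_large_sequence
    (X : Type*) [NormedAddCommGroup X] [NormedSpace ℝ X] [CompleteSpace X]
    -- First Stabilization Principle:
    (FSP : ∀ (C : NNReal), 0 < C → ∀ ε : ℝ, 0 < ε → ∀ k : ℕ, ∃ N : ℕ,
      ∀ F : Subspace ℝ X, finrank ℝ F = N →
        ∀ f : F → ℝ, LipschitzWith C f →
          ∃ G : Subspace ℝ F, finrank ℝ G = k ∧
            ∀ x y : F, x ∈ G → y ∈ G → ‖x‖ = 1 → ‖y‖ = 1 → |f x - f y| < ε)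
    (C : NNReal) (hC : 0 < C) (g : X → ℝ)
    (hg : LipschitzOnWith C g (Metric.sphere (0 : X) 1))
    (L : ℕ → Subspace ℝ X) (hLfd : ∀ n, FiniteDimensional ℝ (L n))
    (hL : Tendsto (fun n => finrank ℝ (L n)) atTop atTop)
    (δ : ℕ → ℝ) (hδpos : ∀ n, 0 < δ n) (hδanti : Antitone δ)
    (hδ0 : Tendsto δ atTop (nhds 0)) :
    ∃ (k : ℕ → ℕ) (L' : ℕ → Subspace ℝ X), StrictMono k ∧
      (∀ n, L' n ≤ L (k n)) ∧
      Tendsto (fun n => finrank ℝ (L' n)) atTop atTop ∧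
      ∃ c : ℝ, ∀ n, ∀ y ∈ L' n, ‖y‖ = 1 → |g y - c| < δ n := by
  -- extend `g` to a `C`-Lipschitz function `g'` on all of `X`
  obtain ⟨g', hg'lip, hg'eq⟩ := hg.extend_real
  -- stabilization dimensions
  have hFSP := fun n => FSP C hC (δ n / 2) (half_pos (hδpos n)) (n + 1)
  choose N hN using hFSP
  -- existence of subspaces of prescribed finrank
  have exists_sub : ∀ (W : Submodule ℝ X), FiniteDimensional ℝ W → ∀ k : ℕ,
      k ≤ finrank ℝ W → ∃ F : Submodule ℝ X, F ≤ W ∧ finrank ℝ F = k := by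
    intro W hW k hk
    obtain ⟨v, hv⟩ := exists_linearIndependent_of_le_finrank (R := ℝ) (M := W) hk
    refine ⟨(Submodule.span ℝ (Set.range v)).map W.subtype,
      Submodule.map_subtype_le _ _, ?_⟩
    rw [Submodule.finrank_map_subtype_eq, finrank_span_eq_card hv, Fintype.card_fin]
  -- key: inside any big enough `L m` there is a subspace of dim `n+1` with small oscillation
  have key : ∀ n m : ℕ, N n ≤ finrank ℝ (L m) →
      ∃ G : Subspace ℝ X, G ≤ L m ∧ finrank ℝ G = n + 1 ∧
        ∀ x y : X, x ∈ G → y ∈ G → ‖x‖ = 1 → ‖y‖ = 1 → |g x - g y| < δ n / 2 := by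
    intro n m hm
    obtain ⟨F, hFle, hFrank⟩ := exists_sub (L m) (hLfd m) (N n) hm
    have hflip : LipschitzWith C (fun x : F => g' x) := by
      have h1 : LipschitzWith 1 ((↑) : F → X) := LipschitzWith.subtype_val _
      simpa [Function.comp_def] using hg'lip.comp h1
    obtain ⟨G0, hG0rank, hG0osc⟩ := hN n F hFrank _ hflip
    refine ⟨G0.map F.subtype, le_trans (Submodule.map_subtype_le F G0) hFle, ?_, ?_⟩
    · rw [Submodule.finrank_map_subtype_eq]; exact hG0rank
    · intro x y hx hy hxn hyn
      obtain ⟨x', hx', rfl⟩ := Submodule.mem_map.mp hx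
      obtain ⟨y', hy', rfl⟩ := Submodule.mem_map.mp hy
      have hxs : (F.subtype x' : X) ∈ Metric.sphere (0 : X) 1 := by
        simpa [mem_sphere_zero_iff_norm] using hxn
      have hys : (F.subtype y' : X) ∈ Metric.sphere (0 : X) 1 := by
        simpa [mem_sphere_zero_iff_norm] using hyn
      have := hG0osc x' y' hx' hy' hxn hyn
      rw [hg'eq hxs, hg'eq hys]
      exact this
  -- choose a strictly monotone sequence of indices with big enough dimension
  obtain ⟨k0, hk0mono, hk0⟩ :=
    Filter.extraction_forall_of_eventually (fun n => hL.eventually_ge_atTop (N n))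
  have key' : ∀ n, ∃ G : Subspace ℝ X, G ≤ L (k0 n) ∧ finrank ℝ G = n + 1 ∧
      ∀ x y : X, x ∈ G → y ∈ G → ‖x‖ = 1 → ‖y‖ = 1 → |g x - g y| < δ n / 2 :=
    fun n => key n (k0 n) (hk0 n)
  choose L1 hL1le hL1rank hL1osc using key'
  -- choose unit vectors in each subspace
  have hy : ∀ n, ∃ y : X, y ∈ L1 n ∧ ‖y‖ = 1 := by
    intro n
    have hbot : L1 n ≠ ⊥ := by
      intro h
      have := hL1rank n
      rw [h, finrank_bot] at this
      omega
    obtain ⟨x, hx, hx0⟩ := (Submodule.ne_bot_iff _).mp hbot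
    exact ⟨‖x‖⁻¹ • x, Submodule.smul_mem _ _ hx, norm_smul_inv_norm hx0⟩
  choose y hymem hynorm using hy
  -- the values `g (y n)` are bounded
  have hsphere : ∀ n, y n ∈ Metric.sphere (0 : X) 1 := by
    intro n; simpa [mem_sphere_zero_iff_norm] using hynorm n
  have hcb : ∀ n, g (y n) ∈ Metric.closedBall (g (y 0)) (2 * C) := by
    intro n
    rw [Metric.mem_closedBall]
    have h1 := hg.dist_le_mul (y n) (hsphere n) (y 0) (hsphere 0)
    have h2 : dist (y n) (y 0) ≤ 2 := by
      have := dist_le_norm_add_norm (y n) (y 0)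
      rw [hynorm n, hynorm 0] at this
      linarith
    have h3 : (C : ℝ) * dist (y n) (y 0) ≤ (C : ℝ) * 2 :=
      mul_le_mul_of_nonneg_left h2 C.coe_nonneg
    calc dist (g (y n)) (g (y 0)) ≤ (C : ℝ) * dist (y n) (y 0) := h1
      _ ≤ (C : ℝ) * 2 := h3
      _ = 2 * C := mul_comm _ _
  -- extract a convergent subsequence of the values
  obtain ⟨a, -, φ, hφmono, hφtend⟩ :=
    tendsto_subseq_of_bounded Metric.isBounded_closedBall hcb
  -- final extraction so that values are within `δ n / 2` of `a`
  have hP : ∀ n : ℕ, ∀ᶠ j in atTop, |g (y (φ j)) - a| < δ n / 2 := by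
    intro n
    have hmem := hφtend (Metric.ball_mem_nhds a (half_pos (hδpos n)))
    filter_upwards [hmem] with j hj
    simpa [Metric.mem_ball, Real.dist_eq] using hj
  obtain ⟨ψ, hψmono, hψ⟩ := Filter.extraction_forall_of_eventually hP
  refine ⟨fun n => k0 (φ (ψ n)), fun n => L1 (φ (ψ n)),
    hk0mono.comp (hφmono.comp hψmono), fun n => hL1le _, ?_, a, ?_⟩
  · have hmono : ∀ n : ℕ, n ≤ finrank ℝ (L1 (φ (ψ n))) := by
      intro n
      rw [hL1rank]
      have : n ≤ φ (ψ n) := (hφmono.comp hψmono).le_apply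
      omega
    exact tendsto_atTop_mono hmono tendsto_id
  · intro n z hz hzn
    have hle : n ≤ φ (ψ n) := (hφmono.comp hψmono).le_apply
    have h1 := hL1osc (φ (ψ n)) z (y (φ (ψ n))) hz (hymem _) hzn (hynorm _)
    have h2 := hψ n
    have h3 : δ (φ (ψ n)) ≤ δ n := hδanti hle
    calc |g z - a| ≤ |g z - g (y (φ (ψ n)))| + |g (y (φ (ψ n))) - a| := by
          have := abs_sub_abs_le_abs_sub (g z - a) 0
          exact abs_sub_le (g z) (g (y (φ (ψ n)))) a
      _ < δ n := by linarith
end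

section
/- Let D = ℚ ∩ (0,1), let ℓ_p(D) be the space of p-summable families indexed by D (1 ≤ p < ∞), and for n ∈ ℕ define T_n : ℓ_p(D) → ℓ_p(D) by T_n(Σ_{q∈D} α_q e_q) = Σ_{j=1}^n Σ_{q∈D} α_q e_{(q+j-1)/n}. Then: (a) each T_n is a well-defined bounded linear operator with ‖T_n x‖_p^p = n ‖x‖_p^p, i.e., T_n/n^{1/p} is an isometry; and (b) T_n and T_m commute for all n, m ∈ ℕ. -/
/-- The index set `D = ℚ ∩ (0,1)`. -/
def Dset : Type := {q : ℚ // 0 < q ∧ q < 1}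

/-- The operator `T_n` on families indexed by `D`, determined by
`T_n e_q = Σ_{j=1}^n e_{(q+j-1)/n}`; pointwise,
`(T_n x)(q') = Σ_{j=0}^{n-1} x(n·q' − j)` whenever `n·q' − j ∈ D`. -/
noncomputable def Tfun (n : ℕ) (x : Dset → ℝ) : Dset → ℝ :=
  fun q' => ∑ j ∈ Finset.range n,
    if h : 0 < (n : ℚ) * q'.1 - j ∧ (n : ℚ) * q'.1 - j < 1 then
      x ⟨(n : ℚ) * q'.1 - j, h⟩
    else 0

/-- only one `j` can satisfy the window condition -/
lemma cond_unique {r : ℚ} {j k : ℕ}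
    (hj : 0 < r - j ∧ r - j < 1) (hk : 0 < r - k ∧ r - k < 1) : j = k := by
  have h1 : (j : ℚ) < (k : ℚ) + 1 := by linarith [hj.1, hk.2]
  have h2 : (k : ℚ) < (j : ℚ) + 1 := by linarith [hk.1, hj.2]
  have h1' : j < k + 1 := by exact_mod_cast h1
  have h2' : k < j + 1 := by exact_mod_cast h2
  omega

/-- summability and tsum of each single-`j` piece -/
lemma aux_piece (p : ℝ) (_hp0 : p ≠ 0) (n : ℕ) (hn : 1 ≤ n) (x : Dset → ℝ)
    (hx : Summable fun q => |x q| ^ p) (j : ℕ) (hj : j < n) :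
    Summable (fun q' : Dset =>
      if h : 0 < (n : ℚ) * q'.1 - j ∧ (n : ℚ) * q'.1 - j < 1 then
        |x ⟨(n : ℚ) * q'.1 - j, h⟩| ^ p else 0) ∧
    (∑' q' : Dset,
      if h : 0 < (n : ℚ) * q'.1 - j ∧ (n : ℚ) * q'.1 - j < 1 then
        |x ⟨(n : ℚ) * q'.1 - j, h⟩| ^ p else 0) = ∑' q : Dset, |x q| ^ p := by
  have hnQ : (0 : ℚ) < n := by exact_mod_cast hn
  have hjn : (j : ℚ) + 1 ≤ n := by exact_mod_cast hj
  set F : Dset → ℝ := fun q' =>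
      if h : 0 < (n : ℚ) * q'.1 - j ∧ (n : ℚ) * q'.1 - j < 1 then
        |x ⟨(n : ℚ) * q'.1 - j, h⟩| ^ p else 0 with hF
  have he : ∀ q : Dset, 0 < (q.1 + j) / n ∧ (q.1 + j) / n < 1 := by
    intro q
    constructor
    · apply div_pos (by linarith [q.2.1, (Nat.cast_nonneg j : (0:ℚ) ≤ j)]) hnQ
    · rw [div_lt_one hnQ]; linarith [q.2.2]
  set e : Dset → Dset := fun q => ⟨(q.1 + j) / n, he q⟩ with heq
  have hinj : Function.Injective e := by
    intro a b hab
    have : (a.1 + j) / n = (b.1 + j) / n := congrArg Subtype.val hab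
    have : a.1 = b.1 := by field_simp at this; linarith
    exact Subtype.ext this
  have harith : ∀ q : Dset, (n : ℚ) * ((q.1 + j) / n) - j = q.1 := by
    intro q; field_simp; ring
  have hcomp : ∀ q : Dset, F (e q) = |x q| ^ p := by
    intro q
    have hc : 0 < (n : ℚ) * ((q.1 + j) / n) - j ∧ (n : ℚ) * ((q.1 + j) / n) - j < 1 := by
      rw [harith q]; exact q.2
    have h1 : F (e q) = |x ⟨(n : ℚ) * ((q.1 + j) / n) - j, hc⟩| ^ p := dif_pos hc
    rw [h1]
    have h2 : (⟨(n : ℚ) * ((q.1 + j) / n) - j, hc⟩ : Dset) = q := Subtype.ext (harith q)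
    rw [h2]
  have hsupp : ∀ q' : Dset, q' ∉ Set.range e → F q' = 0 := by
    intro q' hq'
    simp only [hF]
    rw [dif_neg]
    intro h
    apply hq'
    refine ⟨⟨(n : ℚ) * q'.1 - j, h⟩, ?_⟩
    apply Subtype.ext
    show ((n : ℚ) * q'.1 - j + j) / n = q'.1
    field_simp
    ring
  have hFe : (F ∘ e) = fun q => |x q| ^ p := by
    funext q; exact hcomp q
  constructor
  · rw [← hinj.summable_iff hsupp, hFe]; exact hx
  · rw [← hinj.tsum_eq (f := F)
      (fun q' hq' => by_contra fun hr => (Function.mem_support.mp hq') (hsupp q' hr))]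
    exact tsum_congr hcomp

lemma Tfun_comp (n m : ℕ) (hn : 1 ≤ n) (hm : 1 ≤ m) (x : Dset → ℝ) :
    Tfun n (Tfun m x) = Tfun (n * m) x := by
  have hnQ : (0 : ℚ) < n := by exact_mod_cast hn
  have hmQ : (0 : ℚ) < m := by exact_mod_cast hm
  funext q'
  show (∑ j ∈ Finset.range n,
      if h : 0 < (n : ℚ) * q'.1 - j ∧ (n : ℚ) * q'.1 - j < 1 then
        Tfun m x ⟨(n : ℚ) * q'.1 - j, h⟩ else 0) = _
  have key : ∀ j ∈ Finset.range n,
      (if h : 0 < (n : ℚ) * q'.1 - j ∧ (n : ℚ) * q'.1 - j < 1 then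
        Tfun m x ⟨(n : ℚ) * q'.1 - j, h⟩ else 0)
      = ∑ k ∈ Finset.range m,
          (if h : 0 < ((n * m : ℕ) : ℚ) * q'.1 - ((m * j + k : ℕ) : ℚ)
              ∧ ((n * m : ℕ) : ℚ) * q'.1 - ((m * j + k : ℕ) : ℚ) < 1 then
            x ⟨((n * m : ℕ) : ℚ) * q'.1 - ((m * j + k : ℕ) : ℚ), h⟩ else 0) := by
    intro j hj
    rw [Finset.mem_range] at hj
    by_cases h : 0 < (n : ℚ) * q'.1 - j ∧ (n : ℚ) * q'.1 - j < 1
    · rw [dif_pos h]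
      show (∑ k ∈ Finset.range m, _) = _
      refine Finset.sum_congr rfl fun k hk => ?_
      rw [Finset.mem_range] at hk
      have harith : (m : ℚ) * ((n : ℚ) * q'.1 - j) - k
          = ((n * m : ℕ) : ℚ) * q'.1 - ((m * j + k : ℕ) : ℚ) := by
        push_cast; ring
      simp only [harith]
    · rw [dif_neg h]
      rw [eq_comm, Finset.sum_eq_zero]
      intro k hk
      rw [Finset.mem_range] at hk
      rw [dif_neg]
      intro hc
      apply h
      have h1 : ((m * j + k : ℕ) : ℚ) < ((n * m : ℕ) : ℚ) * q'.1 := by linarith [hc.1]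
      have h2 : ((n * m : ℕ) : ℚ) * q'.1 < ((m * j + k : ℕ) : ℚ) + 1 := by linarith [hc.2]
      push_cast at h1 h2
      have hk' : (k : ℚ) ≤ (m : ℚ) - 1 := by
        have : (k : ℚ) + 1 ≤ m := by exact_mod_cast hk
        linarith
      constructor
      · nlinarith [Nat.cast_nonneg (α := ℚ) k]
      · nlinarith
  rw [Finset.sum_congr rfl key]
  rw [show Tfun (n * m) x q' = ∑ l ∈ Finset.range (n * m),
      (if h : 0 < ((n * m : ℕ) : ℚ) * q'.1 - (l : ℚ)
          ∧ ((n * m : ℕ) : ℚ) * q'.1 - (l : ℚ) < 1 then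
        x ⟨((n * m : ℕ) : ℚ) * q'.1 - (l : ℚ), h⟩ else 0) from rfl]
  rw [← Finset.sum_product']
  refine Finset.sum_nbij' (fun z => m * z.1 + z.2) (fun l => (l / m, l % m)) ?_ ?_ ?_ ?_ ?_
  · rintro ⟨j, k⟩ hz
    simp only [Finset.mem_product, Finset.mem_range] at hz
    simp only [Finset.mem_range]
    calc m * j + k < m * j + m := by omega
    _ = m * (j + 1) := by ring
    _ ≤ m * n := Nat.mul_le_mul_left m hz.1
    _ = n * m := Nat.mul_comm m n
  · intro l hl
    simp only [Finset.mem_range] at hl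
    simp only [Finset.mem_product, Finset.mem_range]
    have hm' : 0 < m := hm
    constructor
    · exact Nat.div_lt_of_lt_mul (by rw [Nat.mul_comm]; exact hl)
    · exact Nat.mod_lt _ hm'
  · rintro ⟨j, k⟩ hz
    simp only [Finset.mem_product, Finset.mem_range] at hz
    have hm' : 0 < m := hm
    have h1 : (m * j + k) / m = j := by
      rw [Nat.mul_add_div hm', Nat.div_eq_of_lt hz.2]
      omega
    have h2 : (m * j + k) % m = k := by
      rw [Nat.mul_add_mod, Nat.mod_eq_of_lt hz.2]
    simp [h1, h2]
  · intro l _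
    exact Nat.div_add_mod l m
  · rintro ⟨j, k⟩ hz
    rfl

set_option maxHeartbeats 1000000 in
/-- `T_n` is linear, `T_n / n^{1/p}` is an isometry on `ℓ_p(D)`, and the
operators `T_n` commute. -/
theorem Tfun_isometry_linear_commute
    (p : ℝ) (hp : 1 ≤ p) (n m : ℕ) (hn : 1 ≤ n) (hm : 1 ≤ m) :
    (∀ x : Dset → ℝ, Summable (fun q => |x q| ^ p) →
        (∑' q' : Dset, |Tfun n x q'| ^ p) = n * ∑' q : Dset, |x q| ^ p) ∧
    (∀ x y : Dset → ℝ, Tfun n (x + y) = Tfun n x + Tfun n y) ∧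
    (∀ (c : ℝ) (x : Dset → ℝ), Tfun n (c • x) = c • Tfun n x) ∧
    (∀ x : Dset → ℝ, Tfun n (Tfun m x) = Tfun m (Tfun n x)) := by
  have hp0 : p ≠ 0 := by linarith
  refine ⟨?_, ?_, ?_, ?_⟩
  · intro x hx
    set F : ℕ → Dset → ℝ := fun j q' =>
      if h : 0 < (n : ℚ) * q'.1 - j ∧ (n : ℚ) * q'.1 - j < 1 then
        |x ⟨(n : ℚ) * q'.1 - j, h⟩| ^ p else 0 with hF
    have hpoint : ∀ q' : Dset, |Tfun n x q'| ^ p = ∑ j ∈ Finset.range n, F j q' := by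
      intro q'
      simp only [hF, Tfun]
      by_cases hex : ∃ j ∈ Finset.range n,
          0 < (n : ℚ) * q'.1 - j ∧ (n : ℚ) * q'.1 - j < 1
      · obtain ⟨j₀, hj₀s, hj₀⟩ := hex
        have hL : (∑ j ∈ Finset.range n,
            if h : 0 < (n : ℚ) * q'.1 - j ∧ (n : ℚ) * q'.1 - j < 1 then
              x ⟨(n : ℚ) * q'.1 - j, h⟩ else 0)
            = x ⟨(n : ℚ) * q'.1 - j₀, hj₀⟩ := by
          rw [Finset.sum_eq_single_of_mem j₀ hj₀s
            (fun j _ hne => dif_neg fun hc => hne (cond_unique hc hj₀)), dif_pos hj₀]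
        have hR : (∑ j ∈ Finset.range n,
            if h : 0 < (n : ℚ) * q'.1 - j ∧ (n : ℚ) * q'.1 - j < 1 then
              |x ⟨(n : ℚ) * q'.1 - j, h⟩| ^ p else 0)
            = |x ⟨(n : ℚ) * q'.1 - j₀, hj₀⟩| ^ p := by
          rw [Finset.sum_eq_single_of_mem j₀ hj₀s
            (fun j _ hne => dif_neg fun hc => hne (cond_unique hc hj₀)), dif_pos hj₀]
        rw [hL, hR]
      · rw [Finset.sum_eq_zero (fun j hj => dif_neg fun hc => hex ⟨j, hj, hc⟩),
            Finset.sum_eq_zero (fun j hj => dif_neg fun hc => hex ⟨j, hj, hc⟩),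
            abs_zero, Real.zero_rpow hp0]
    have hsummand : ∀ j ∈ Finset.range n, Summable (F j) := fun j hj =>
      (aux_piece p hp0 n hn x hx j (Finset.mem_range.mp hj)).1
    calc ∑' q' : Dset, |Tfun n x q'| ^ p
        = ∑' q' : Dset, ∑ j ∈ Finset.range n, F j q' := tsum_congr hpoint
      _ = ∑ j ∈ Finset.range n, ∑' q' : Dset, F j q' := Summable.tsum_finsetSum hsummand
      _ = ∑ j ∈ Finset.range n, ∑' q : Dset, |x q| ^ p := by
          refine Finset.sum_congr rfl fun j hj => ?_
          exact (aux_piece p hp0 n hn x hx j (Finset.mem_range.mp hj)).2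
      _ = n * ∑' q : Dset, |x q| ^ p := by
          rw [Finset.sum_const, Finset.card_range, nsmul_eq_mul]
  · intro x y
    funext q'
    simp only [Tfun, Pi.add_apply, ← Finset.sum_add_distrib]
    refine Finset.sum_congr rfl fun j _ => ?_
    by_cases h : 0 < (n : ℚ) * q'.1 - j ∧ (n : ℚ) * q'.1 - j < 1
    · rw [dif_pos h, dif_pos h, dif_pos h]; rfl
    · rw [dif_neg h, dif_neg h, dif_neg h]; simp
  · intro c x
    funext q'
    simp only [Tfun, Pi.smul_apply, smul_eq_mul, Finset.mul_sum]
    refine Finset.sum_congr rfl fun j _ => ?_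
    by_cases h : 0 < (n : ℚ) * q'.1 - j ∧ (n : ℚ) * q'.1 - j < 1
    · rw [dif_pos h, dif_pos h]; rfl
    · rw [dif_neg h, dif_neg h]; simp
  · intro x
    rw [Tfun_comp n m hn hm, Tfun_comp m n hm hn, Nat.mul_comm]
end

section
/- With T_n : ℓ_p(D) → ℓ_p(D) as above (T_n(Σ α_q e_q) = Σ_{j=1}^n Σ_q α_q e_{(q+j-1)/n}, D = ℚ∩(0,1)), for every n ∈ ℕ, λ_n = n^{1/p} is an approximate eigenvalue of T_n: for every δ > 0 there exists a finitely supported u in the unit sphere of ℓ_p(D) with ‖T_n u − n^{1/p} u‖ < δ. -/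
instance : DecidableEq Dset := by unfold Dset; infer_instance

namespace TfunAux
variable (n k : ℕ)
def bb : ℕ := n ^ k + 1
def pt (i m : ℕ) : ℚ := ((1 : ℚ) / (bb n k) + m) / n ^ i
variable {n k}
lemma bb_pos : 0 < bb n k := Nat.succ_pos _

lemma pt_cross (hn : 2 ≤ n) {i i' m m' : ℕ}
    (h : pt n k i m = pt n k i' m') :
    (1 + m * bb n k) * n ^ i' = (1 + m' * bb n k) * n ^ i := by
  have hb : ((bb n k : ℚ)) ≠ 0 := by exact_mod_cast (bb_pos (n := n) (k := k)).ne'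
  have hn0 : ((n : ℚ)) ≠ 0 := by
    have : 0 < n := by omega
    exact_mod_cast this.ne'
  unfold pt at h
  field_simp at h
  have key2 : (bb n k : ℚ) * ((1 + m * bb n k) * n ^ i') =
      (bb n k : ℚ) * ((1 + m' * bb n k) * n ^ i) := by linear_combination (bb n k : ℚ) * h
  have key := mul_left_cancel₀ hb key2
  exact_mod_cast key

lemma core (hn : 2 ≤ n) {d : ℕ} (hd : d ≤ k) {a a' : ℕ}
    (h : n ^ d + bb n k * a = 1 + bb n k * a') : d = 0 ∧ a = a' := by
  have hb := bb_pos (n := n) (k := k)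
  have h3 : n ^ d < bb n k := by
    have : n ^ d ≤ n ^ k := Nat.pow_le_pow_right (by omega) hd
    unfold bb; omega
  rcases Nat.eq_zero_or_pos d with rfl | hd1
  · simp only [pow_zero] at h
    refine ⟨rfl, Nat.eq_of_mul_eq_mul_left hb (by omega)⟩
  · exfalso
    have h2 : 2 ≤ n ^ d := by
      calc 2 ≤ n := hn
      _ = n ^ 1 := (pow_one n).symm
      _ ≤ n ^ d := Nat.pow_le_pow_right (by omega) hd1
    have h' : (n : ℤ) ^ d + (bb n k : ℤ) * a = 1 + (bb n k : ℤ) * a' := by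
      exact_mod_cast h
    have hdvd : (bb n k : ℤ) ∣ (n : ℤ) ^ d - 1 := ⟨(a' : ℤ) - a, by linarith⟩
    have hle : (bb n k : ℤ) ≤ (n : ℤ) ^ d - 1 := by
      apply Int.le_of_dvd _ hdvd
      have : (2 : ℤ) ≤ (n : ℤ) ^ d := by exact_mod_cast h2
      omega
    have : ((n : ℤ) ^ d : ℤ) < (bb n k : ℤ) := by exact_mod_cast h3
    omega

lemma pt_inj_aux (hn : 2 ≤ n) {i i' m m' : ℕ} (hi' : i' ≤ k) (hle : i ≤ i')
    (h : pt n k i m = pt n k i' m') : i = i' ∧ m = m' := by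
  have hcross := pt_cross hn h
  obtain ⟨d, rfl⟩ := Nat.exists_eq_add_of_le hle
  have hnp : 0 < n ^ i := Nat.pow_pos (by omega)
  rw [pow_add] at hcross
  -- (1+m*b) * (n^i * n^d) = (1+m'*b) * n^i
  have hc2 : n ^ i * ((1 + m * bb n k) * n ^ d) = n ^ i * (1 + m' * bb n k) := by ring_nf; ring_nf at hcross; linarith
  have hc3 : (1 + m * bb n k) * n ^ d = 1 + m' * bb n k :=
    Nat.eq_of_mul_eq_mul_left hnp hc2
  have hc4 : n ^ d + bb n k * (m * n ^ d) = 1 + bb n k * m' := by ring_nf; ring_nf at hc3; linarith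
  have hd : d ≤ k := by omega
  obtain ⟨hd0, hm⟩ := core hn hd hc4
  subst hd0
  simp at hm ⊢
  omega


lemma pt_inj (hn : 2 ≤ n) {i i' m m' : ℕ} (hi : i ≤ k) (hi' : i' ≤ k)
    (h : pt n k i m = pt n k i' m') : i = i' ∧ m = m' := by
  rcases le_total i i' with hle | hle
  · exact pt_inj_aux hn hi' hle h
  · obtain ⟨h1, h2⟩ := pt_inj_aux hn hi hle h.symm
    exact ⟨h1.symm, h2.symm⟩

lemma pt_mem (hn : 2 ≤ n) {i m : ℕ} (hm : m < n ^ i) :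
    0 < pt n k i m ∧ pt n k i m < 1 := by
  have hb : (1 : ℚ) < (bb n k : ℚ) := by
    have h1 : 1 ≤ n ^ k := Nat.one_le_pow _ _ (by omega)
    have : 2 ≤ bb n k := by unfold bb; omega
    exact_mod_cast this
  have hb0 : (0 : ℚ) < (bb n k : ℚ) := by linarith
  have hnp : (0 : ℚ) < (n : ℚ) ^ i := by positivity
  have hnum : (0 : ℚ) < 1 / (bb n k : ℚ) + m := by positivity
  have hmq : (m : ℚ) ≤ (n : ℚ) ^ i - 1 := by
    have : (m : ℚ) + 1 ≤ ((n ^ i : ℕ) : ℚ) := by exact_mod_cast hm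
    push_cast at this
    linarith
  have hnum2 : 1 / (bb n k : ℚ) + m < (n : ℚ) ^ i := by
    have : 1 / (bb n k : ℚ) < 1 := by
      rw [div_lt_one hb0]; exact hb
    linarith
  unfold pt
  constructor
  · exact div_pos hnum hnp
  · rw [div_lt_one hnp]; exact hnum2


lemma pt_step (hn : 2 ≤ n) (i m : ℕ) :
    (n : ℚ) * pt n k (i + 1) m = pt n k i (m % n ^ i) + (m / n ^ i : ℕ) := by
  have hn0 : ((n : ℚ)) ≠ 0 := by
    have : 0 < n := by omega
    exact_mod_cast this.ne'
  have hmod : ((m : ℚ)) = (n : ℚ) ^ i * (m / n ^ i : ℕ) + ((m % n ^ i : ℕ) : ℚ) := by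
    exact_mod_cast (Nat.div_add_mod m (n ^ i)).symm
  unfold pt
  rw [hmod]
  field_simp
  ring

lemma pt_unstep (hn : 2 ≤ n) {x : ℚ} {i m j : ℕ}
    (h : (n : ℚ) * x - j = pt n k i m) : x = pt n k (i + 1) (m + j * n ^ i) := by
  have hn0 : ((n : ℚ)) ≠ 0 := by
    have : 0 < n := by omega
    exact_mod_cast this.ne'
  have hx : x = (pt n k i m + j) / n := by
    field_simp
    linarith
  rw [hx]
  unfold pt
  push_cast
  field_simp
  ring

lemma pt_zero_step (hn : 2 ≤ n) {i : ℕ} (hi : i + 1 ≤ k) (j m : ℕ) :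
    (n : ℚ) * pt n k 0 0 - j ≠ pt n k i m := by
  intro h
  have hq : (n : ℚ) ^ (i + 1) = 1 + (bb n k : ℚ) * (m + j * n ^ i) := by
    have hb : ((bb n k : ℚ)) ≠ 0 := by exact_mod_cast (bb_pos (n := n) (k := k)).ne'
    have hn0 : ((n : ℚ)) ≠ 0 := by
      have : 0 < n := by omega
      exact_mod_cast this.ne'
    unfold pt at h
    field_simp at h
    have key2 : (bb n k : ℚ) * ((n : ℚ) ^ (i + 1)) =
        (bb n k : ℚ) * (1 + (bb n k : ℚ) * (m + j * n ^ i)) := by linear_combination (bb n k : ℚ) * h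
    exact mul_left_cancel₀ hb key2
  have hnat : n ^ (i + 1) = 1 + bb n k * (m + j * n ^ i) := by exact_mod_cast hq
  have hcore : n ^ (i + 1) + bb n k * 0 = 1 + bb n k * (m + j * n ^ i) := by omega
  obtain ⟨h0, -⟩ := core hn hi hcore
  omega


variable (n k)

def idx (K : ℕ) : Finset ((_ : ℕ) × ℕ) :=
  (Finset.range K).sigma fun i => Finset.range (n ^ i)

noncomputable def Uf (cr : ℕ → ℝ) : ℚ → ℝ :=
  fun x => ∑ y ∈ idx n k, if x = pt n k y.1 y.2 then cr y.1 else 0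

noncomputable def TUf (U : ℚ → ℝ) : ℚ → ℝ :=
  fun x => ∑ j ∈ Finset.range n,
    if 0 < (n : ℚ) * x - j ∧ (n : ℚ) * x - j < 1 then U ((n : ℚ) * x - j) else 0

variable {n k}

lemma mem_idx {K : ℕ} {y : (_ : ℕ) × ℕ} :
    y ∈ idx n K ↔ y.1 < K ∧ y.2 < n ^ y.1 := by
  cases y
  simp [idx]

lemma Uf_pt (hn : 2 ≤ n) {cr : ℕ → ℝ} {i m : ℕ} (hi : i < k) (hm : m < n ^ i) :
    Uf n k cr (pt n k i m) = cr i := by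
  unfold Uf
  rw [Finset.sum_eq_single (⟨i, m⟩ : (_ : ℕ) × ℕ)]
  · simp
  · rintro ⟨i', m'⟩ hy hne
    rw [if_neg]
    intro h
    rw [mem_idx] at hy
    obtain ⟨h1, h2⟩ := pt_inj hn (le_of_lt hy.1) (le_of_lt hi) h.symm
    exact hne (by subst h1; subst h2; rfl)
  · intro h
    exact absurd (mem_idx.mpr ⟨hi, hm⟩) h

lemma Uf_ne_zero {cr : ℕ → ℝ} {x : ℚ} (h : Uf n k cr x ≠ 0) :
    ∃ i, i < k ∧ ∃ m, m < n ^ i ∧ x = pt n k i m := by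
  obtain ⟨y, hy, hne⟩ := Finset.exists_ne_zero_of_sum_ne_zero h
  rw [mem_idx] at hy
  refine ⟨y.1, hy.1, y.2, hy.2, ?_⟩
  by_contra hx
  rw [if_neg hx] at hne
  exact hne rfl


lemma TUf_pt_succ (hn : 2 ≤ n) {cr : ℕ → ℝ} {i m : ℕ} (hi : i < k)
    (hm : m < n ^ (i + 1)) :
    TUf n (Uf n k cr) (pt n k (i + 1) m) = cr i := by
  have hnp : 0 < n ^ i := Nat.pow_pos (by omega)
  have hstep := pt_step (k := k) hn i m
  have hjlt : m / n ^ i < n := by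
    rw [Nat.div_lt_iff_lt_mul hnp, mul_comm]
    rw [pow_succ] at hm
    exact hm
  have hmm : m % n ^ i < n ^ i := Nat.mod_lt _ hnp
  have hmem := pt_mem (k := k) hn hmm
  unfold TUf
  rw [Finset.sum_eq_single (m / n ^ i)]
  · have harg : (n : ℚ) * pt n k (i + 1) m - (m / n ^ i : ℕ) = pt n k i (m % n ^ i) := by
      linarith
    rw [if_pos (by rw [harg]; exact hmem), harg, Uf_pt hn hi hmm]
  · intro j hj hne
    rw [if_neg]
    rintro ⟨h1, h2⟩
    have harg : (n : ℚ) * pt n k (i + 1) m - j = pt n k i (m % n ^ i) + ((m / n ^ i : ℕ) : ℚ) - j := by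
      linarith
    rw [harg] at h1 h2
    have c1 : ((j : ℚ)) < ((m / n ^ i : ℕ) : ℚ) + 1 := by linarith [hmem.1, hmem.2]
    have c2 : ((m / n ^ i : ℕ) : ℚ) < (j : ℚ) + 1 := by linarith [hmem.1, hmem.2]
    have c1' : j < m / n ^ i + 1 := by exact_mod_cast c1
    have c2' : m / n ^ i < j + 1 := by exact_mod_cast c2
    exact hne (by omega)
  · intro h
    exact absurd (Finset.mem_range.mpr hjlt) h

lemma TUf_eq_zero (hn : 2 ≤ n) {cr : ℕ → ℝ} {x : ℚ}
    (hx : ∀ i m, i ≤ k → m < n ^ i → x ≠ pt n k i m) :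
    TUf n (Uf n k cr) x = 0 := by
  apply Finset.sum_eq_zero
  intro j hj
  split_ifs with hcond
  · by_contra hne
    obtain ⟨i, hi, m, hm, heq⟩ := Uf_ne_zero hne
    have hxe := pt_unstep hn heq
    have hjn : j < n := Finset.mem_range.mp hj
    have hmlt : m + j * n ^ i < n ^ (i + 1) := by
      rw [pow_succ]
      calc m + j * n ^ i < n ^ i + j * n ^ i := by omega
      _ = (j + 1) * n ^ i := by ring
      _ ≤ n * n ^ i := Nat.mul_le_mul_right _ (by omega)
      _ = n ^ i * n := by ring
    exact hx (i + 1) (m + j * n ^ i) (by omega) hmlt hxe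
  · rfl

lemma TUf_q0 (hn : 2 ≤ n) {cr : ℕ → ℝ} :
    TUf n (Uf n k cr) (pt n k 0 0) = 0 := by
  apply Finset.sum_eq_zero
  intro j hj
  split_ifs with hcond
  · by_contra hne
    obtain ⟨i, hi, m, hm, heq⟩ := Uf_ne_zero hne
    exact pt_zero_step hn (by omega) j m heq
  · rfl

lemma sum_idx {K : ℕ} (f : ℕ → ℝ) :
    ∑ y ∈ idx n K, f y.1 = ∑ i ∈ Finset.range K, (n ^ i : ℕ) * f i := by
  rw [idx, Finset.sum_sigma]
  apply Finset.sum_congr rfl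
  intro i _
  show ∑ _s ∈ Finset.range (n ^ i), f i = _
  rw [Finset.sum_const, Finset.card_range, nsmul_eq_mul]

lemma Uf_pt_top (hn : 2 ≤ n) {cr : ℕ → ℝ} {m : ℕ} (hm : m < n ^ k) :
    Uf n k cr (pt n k k m) = 0 := by
  by_contra hne
  obtain ⟨i, hi, m', hm', heq⟩ := Uf_ne_zero hne
  obtain ⟨h1, -⟩ := pt_inj hn (le_refl k) (le_of_lt hi) heq
  omega

end TfunAux

/-- `λ_n = n^{1/p}` is an approximate eigenvalue of `T_n` on `ℓ_p(D)`:
for every `δ > 0` there is a finitely supported unit vector `u` with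
`‖T_n u − n^{1/p} u‖_p < δ`. -/
theorem Tfun_approximate_eigenvalue
    (p : ℝ) (hp : 1 ≤ p) (n : ℕ) (hn : 1 ≤ n) (δ : ℝ) (hδ : 0 < δ) :
    ∃ u : Dset → ℝ, (Function.support u).Finite ∧
      (∑' q : Dset, |u q| ^ p) = 1 ∧
      (∑' q : Dset, |Tfun n u q - (n : ℝ) ^ (1 / p) * u q| ^ p) ^ (1 / p) < δ := by
  have hp0 : (0 : ℝ) < p := lt_of_lt_of_le one_pos hp
  have hip : (0 : ℝ) < 1 / p := by positivity
  rcases eq_or_lt_of_le hn with h1 | hn2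
  · -- n = 1 : identity operator
    subst h1
    set qh : Dset := ⟨1/2, by norm_num⟩ with hqh
    refine ⟨fun q => if q.1 = 1/2 then 1 else 0, ?_, ?_, ?_⟩
    · apply Set.Finite.subset (Set.finite_singleton qh)
      intro q hq
      simp only [Function.mem_support] at hq
      have : q.1 = 1/2 := by by_contra h; rw [if_neg h] at hq; exact hq rfl
      simp only [Set.mem_singleton_iff]
      exact Subtype.ext this
    · rw [tsum_eq_single qh]
      · norm_num
      · intro q hq
        have hne : q.1 ≠ 1/2 := fun h => hq (Subtype.ext h)
        show |if (q.1 : ℚ) = 1/2 then (1:ℝ) else 0| ^ p = 0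
        rw [if_neg hne, abs_zero, Real.zero_rpow hp0.ne']
    · have hz : ∀ q : Dset, Tfun 1 (fun q => if q.1 = 1/2 then (1:ℝ) else 0) q
          - ((1 : ℕ) : ℝ) ^ (1/p) * (if q.1 = 1/2 then (1:ℝ) else 0) = 0 := by
        intro q
        have h2 := q.2
        simp only [Tfun, Finset.range_one, Finset.sum_singleton, Nat.cast_one,
          Nat.cast_zero, one_mul, sub_zero, Real.one_rpow]
        rw [dif_pos ⟨h2.1, h2.2⟩]
        ring
      have h0 : (∑' q : Dset, |Tfun 1 (fun q => if q.1 = 1/2 then (1:ℝ) else 0) q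
          - ((1 : ℕ) : ℝ) ^ (1/p) * (if q.1 = 1/2 then (1:ℝ) else 0)| ^ p) = 0 := by
        simp only [hz, abs_zero, Real.zero_rpow hp0.ne']
        exact tsum_zero
      rw [h0, Real.zero_rpow (ne_of_gt hip)]
      exact hδ
  · -- 2 ≤ n
    have hn2 : 2 ≤ n := hn2
    have hnR : (0 : ℝ) < n := by positivity
    have hδp : (0 : ℝ) < δ ^ p := Real.rpow_pos_of_pos hδ p
    set K : ℕ := ⌈(2 * n : ℝ) / δ ^ p⌉₊ with hK
    set k : ℕ := K + 1 with hkdef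
    have hk1 : 1 ≤ k := by omega
    have hkR : (0 : ℝ) < k := by positivity
    have hklt : 2 * (n : ℝ) * (k : ℝ)⁻¹ < δ ^ p := by
      have h1 : (2 * n : ℝ) / δ ^ p < k := by
        calc (2 * n : ℝ) / δ ^ p ≤ K := Nat.le_ceil _
        _ < k := by exact_mod_cast Nat.lt_succ_self K
      rw [div_lt_iff₀ hδp] at h1
      rw [mul_inv_lt_iff₀' hkR]
      linarith
    set r : ℝ := (n : ℝ) ^ (-(1 / p)) with hrdef
    set c : ℝ := (k : ℝ) ^ (-(1 / p)) with hcdef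
    have hr0 : 0 < r := Real.rpow_pos_of_pos hnR _
    have hc0 : 0 < c := Real.rpow_pos_of_pos hkR _
    set lam : ℝ := (n : ℝ) ^ (1 / p) with hlamdef
    have hlam0 : 0 < lam := Real.rpow_pos_of_pos hnR _
    have hlamr : lam * r = 1 := by
      rw [hlamdef, hrdef, ← Real.rpow_add hnR]
      simp
    have hrp : ∀ i : ℕ, (r ^ i) ^ p = ((n : ℝ) ^ i)⁻¹ := by
      intro i
      rw [hrdef, ← Real.rpow_natCast ((n : ℝ) ^ (-(1 / p))) i,
        ← Real.rpow_mul hnR.le, ← Real.rpow_mul hnR.le]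
      have : -(1 / p) * i * p = -(i : ℝ) := by field_simp
      rw [this, Real.rpow_neg hnR.le, Real.rpow_natCast]
    have hcp : c ^ p = (k : ℝ)⁻¹ := by
      rw [hcdef, ← Real.rpow_mul hkR.le]
      have : -(1 / p) * p = -1 := by field_simp
      rw [this, Real.rpow_neg_one]
    have hlamp : lam ^ p = (n : ℝ) := by
      rw [hlamdef, ← Real.rpow_mul hnR.le]
      have : 1 / p * p = 1 := by field_simp
      rw [this, Real.rpow_one]
    set cr : ℕ → ℝ := fun i => c * r ^ i with hcrdef
    set U : ℚ → ℝ := TfunAux.Uf n k cr with hUdef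
    set u : Dset → ℝ := fun q => U q.1 with hudef
    have hTf : ∀ q : Dset, Tfun n u q = TfunAux.TUf n U q.1 := fun q => rfl
    have hmemD : ∀ y : {x // x ∈ TfunAux.idx n (k + 1)},
        0 < TfunAux.pt n k y.1.1 y.1.2 ∧ TfunAux.pt n k y.1.1 y.1.2 < 1 :=
      fun y => TfunAux.pt_mem hn2 (TfunAux.mem_idx.mp y.2).2
    set g : {x // x ∈ TfunAux.idx n (k + 1)} → Dset :=
      fun y => ⟨TfunAux.pt n k y.1.1 y.1.2, hmemD y⟩ with hgdef
    have hginj : ∀ y ∈ (TfunAux.idx n (k + 1)).attach, ∀ z ∈ (TfunAux.idx n (k + 1)).attach,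
        g y = g z → y = z := by
      rintro ⟨⟨i, m⟩, hy⟩ - ⟨⟨i', m'⟩, hz⟩ - hgz
      have h1 : TfunAux.pt n k i m = TfunAux.pt n k i' m' := congrArg Subtype.val hgz
      have hy' : i < k + 1 ∧ m < n ^ i := TfunAux.mem_idx.mp hy
      have hz' : i' < k + 1 ∧ m' < n ^ i' := TfunAux.mem_idx.mp hz
      obtain ⟨e1, e2⟩ := TfunAux.pt_inj hn2 (by omega : i ≤ k) (by omega : i' ≤ k) h1
      subst e1; subst e2; rfl
    have hmemD1 : ∀ y : {x // x ∈ TfunAux.idx n k},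
        0 < TfunAux.pt n k y.1.1 y.1.2 ∧ TfunAux.pt n k y.1.1 y.1.2 < 1 :=
      fun y => TfunAux.pt_mem hn2 (TfunAux.mem_idx.mp y.2).2
    set g1 : {x // x ∈ TfunAux.idx n k} → Dset :=
      fun y => ⟨TfunAux.pt n k y.1.1 y.1.2, hmemD1 y⟩ with hg1def
    have hg1inj : ∀ y ∈ (TfunAux.idx n k).attach, ∀ z ∈ (TfunAux.idx n k).attach,
        g1 y = g1 z → y = z := by
      rintro ⟨⟨i, m⟩, hy⟩ - ⟨⟨i', m'⟩, hz⟩ - hgz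
      have h1 : TfunAux.pt n k i m = TfunAux.pt n k i' m' := congrArg Subtype.val hgz
      have hy' : i < k ∧ m < n ^ i := TfunAux.mem_idx.mp hy
      have hz' : i' < k ∧ m' < n ^ i' := TfunAux.mem_idx.mp hz
      obtain ⟨e1, e2⟩ := TfunAux.pt_inj hn2 (by omega : i ≤ k) (by omega : i' ≤ k) h1
      subst e1; subst e2; rfl
    set S1 : Finset Dset := (TfunAux.idx n k).attach.image g1 with hS1def
    have hsupp : ∀ q : Dset, q ∉ S1 → u q = 0 := by
      intro q hq
      by_contra hne
      obtain ⟨i, hi, m, hm, heq⟩ := TfunAux.Uf_ne_zero hne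
      apply hq
      rw [hS1def]
      apply Finset.mem_image.mpr
      exact ⟨⟨⟨i, m⟩, TfunAux.mem_idx.mpr ⟨hi, hm⟩⟩, Finset.mem_attach _ _,
        (Subtype.ext heq.symm)⟩
    refine ⟨u, ?_, ?_, ?_⟩
    · apply Set.Finite.subset (S1 : Set Dset).toFinite
      intro q hq
      simp only [Function.mem_support] at hq
      by_contra hq2
      exact hq (hsupp q (by simpa using hq2))
    · -- unit norm
      have hcongr : ∀ y ∈ (TfunAux.idx n k).attach,
          |u (g1 y)| ^ p = (fun x : (_ : ℕ) × ℕ => (k : ℝ)⁻¹ * ((n : ℝ) ^ x.1)⁻¹) y.1 := by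
        intro y _
        have hy' : y.1.1 < k ∧ y.1.2 < n ^ y.1.1 := TfunAux.mem_idx.mp y.2
        have hval : u (g1 y) = c * r ^ y.1.1 := TfunAux.Uf_pt hn2 hy'.1 hy'.2
        rw [hval, abs_of_pos (by positivity),
          Real.mul_rpow hc0.le (pow_nonneg hr0.le _), hcp, hrp]
      rw [tsum_eq_sum (s := S1)
        (fun q hq => by rw [hsupp q hq, abs_zero, Real.zero_rpow hp0.ne']),
        hS1def, Finset.sum_image hg1inj, Finset.sum_congr rfl hcongr,
        Finset.sum_attach _ (fun x : (_ : ℕ) × ℕ => (k : ℝ)⁻¹ * ((n : ℝ) ^ x.1)⁻¹),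
        TfunAux.sum_idx (f := fun i => (k : ℝ)⁻¹ * ((n : ℝ) ^ i)⁻¹)]
      have hterm : ∀ i ∈ Finset.range k,
          ((n ^ i : ℕ) : ℝ) * ((k : ℝ)⁻¹ * ((n : ℝ) ^ i)⁻¹) = (k : ℝ)⁻¹ := by
        intro i _
        have hc : ((n ^ i : ℕ) : ℝ) = (n : ℝ) ^ i := by push_cast; ring
        rw [hc]
        field_simp
      rw [Finset.sum_congr rfl hterm, Finset.sum_const, Finset.card_range, nsmul_eq_mul,
        mul_inv_cancel₀ hkR.ne']
    · -- approximate eigenvalue estimate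
      set S2 : Finset Dset := (TfunAux.idx n (k + 1)).attach.image g with hS2def
      have hmemlevel : ∀ q : Dset,
          (∃ i, i ≤ k ∧ ∃ m, m < n ^ i ∧ q.1 = TfunAux.pt n k i m) → q ∈ S2 := by
        rintro q ⟨i, hi, m, hm, heq⟩
        exact Finset.mem_image.mpr ⟨⟨⟨i, m⟩, TfunAux.mem_idx.mpr ⟨Nat.lt_succ_of_le hi, hm⟩⟩,
          Finset.mem_attach _ _, Subtype.ext heq.symm⟩
      have hout : ∀ q ∉ S2, |Tfun n u q - lam * u q| ^ p = 0 := by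
        intro q hq
        have hnot : ∀ i m, i ≤ k → m < n ^ i → q.1 ≠ TfunAux.pt n k i m := by
          intro i m hi hm heq
          exact hq (hmemlevel q ⟨i, hi, m, hm, heq⟩)
        have hU0 : U q.1 = 0 := by
          by_contra h
          obtain ⟨i, hi, m, hm, heq⟩ := TfunAux.Uf_ne_zero h
          exact hnot i m (by omega) hm heq
        have hT0 : TfunAux.TUf n U q.1 = 0 := TfunAux.TUf_eq_zero hn2 hnot
        rw [hTf q]
        show |TfunAux.TUf n U q.1 - lam * u q| ^ p = 0
        have hu0 : u q = 0 := hU0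
        rw [hT0, hu0, mul_zero, sub_zero, abs_zero, Real.zero_rpow hp0.ne']
      set w : (_ : ℕ) × ℕ → ℝ := fun x =>
        if x.1 = 0 then (n : ℝ) * (k : ℝ)⁻¹
        else if x.1 = k then (k : ℝ)⁻¹ * ((n : ℝ) ^ K)⁻¹ else 0 with hwdef
      have hval2 : ∀ y ∈ (TfunAux.idx n (k + 1)).attach,
          |Tfun n u (g y) - lam * u (g y)| ^ p = w y.1 := by
        intro y _
        have hy' : y.1.1 < k + 1 ∧ y.1.2 < n ^ y.1.1 := TfunAux.mem_idx.mp y.2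
        rw [hTf]
        obtain ⟨⟨i, m⟩, hy⟩ := y
        show |TfunAux.TUf n U (TfunAux.pt n k i m) - lam * U (TfunAux.pt n k i m)| ^ p
          = w ⟨i, m⟩
        dsimp only at hy'
        rcases Nat.eq_zero_or_pos i with rfl | hipos
        · have hm0 : m = 0 := by simpa using hy'.2
          subst hm0
          have hU00 : U (TfunAux.pt n k 0 0) = c * r ^ 0 :=
            TfunAux.Uf_pt hn2 (by omega) (by simp)
          rw [TfunAux.TUf_q0 hn2, hU00, pow_zero, mul_one, zero_sub, abs_neg,
            abs_of_pos (by positivity), Real.mul_rpow hlam0.le hc0.le, hlamp, hcp,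
            hwdef]
          simp
        · obtain ⟨i', rfl⟩ : ∃ i', i = i' + 1 := ⟨i - 1, by omega⟩
          have hii : i' < k := by omega
          rw [TfunAux.TUf_pt_succ hn2 hii hy'.2]
          rcases Nat.lt_or_ge (i' + 1) k with hlt | hge
          · have hUm : U (TfunAux.pt n k (i' + 1) m) = c * r ^ (i' + 1) :=
              TfunAux.Uf_pt hn2 hlt hy'.2
            rw [hUm]
            have hz : cr i' - lam * (c * r ^ (i' + 1)) = 0 := by
              show c * r ^ i' - lam * (c * r ^ (i' + 1)) = 0
              rw [pow_succ]
              linear_combination (-(c * r ^ i')) * hlamr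
            rw [hz, abs_zero, Real.zero_rpow hp0.ne', hwdef]
            have h1 : i' + 1 ≠ 0 := by omega
            have h2 : i' + 1 ≠ k := by omega
            simp [h1, h2]
          · have hek : i' + 1 = k := by omega
            have hUm : U (TfunAux.pt n k (i' + 1) m) = 0 := by
              rw [hek] at hy'
              rw [hek]
              exact TfunAux.Uf_pt_top hn2 hy'.2
            rw [hUm, mul_zero, sub_zero]
            show |c * r ^ i'| ^ p = w ⟨i' + 1, m⟩
            rw [abs_of_pos (by positivity),
              Real.mul_rpow hc0.le (pow_nonneg hr0.le _), hcp, hrp, hwdef]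
            have h1 : i' + 1 ≠ 0 := by omega
            have h3 : i' = K := by omega
            simp [h1, h3, hkdef]
      rw [tsum_eq_sum (s := S2) hout, hS2def, Finset.sum_image hginj,
        Finset.sum_congr rfl hval2, Finset.sum_attach _ w,
        TfunAux.sum_idx (f := fun i => w ⟨i, 0⟩)]
      show (∑ i ∈ Finset.range (k + 1), ((n ^ i : ℕ) : ℝ) * w ⟨i, 0⟩) ^ (1 / p) < δ
      have hsplit : ∀ i ∈ Finset.range (k + 1), ((n ^ i : ℕ) : ℝ) * w ⟨i, 0⟩
          = (if i = 0 then (n : ℝ) * (k : ℝ)⁻¹ else 0)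
            + (if i = k then (n : ℝ) * (k : ℝ)⁻¹ else 0) := by
        intro i _
        have hknz : k ≠ 0 := by omega
        have h0k : (0 : ℕ) ≠ k := fun h => hknz h.symm
        rcases eq_or_ne i 0 with rfl | h0
        · simp [hwdef, h0k]
        · rcases eq_or_ne i k with hik | hk2
          · have hcast : ((n ^ i : ℕ) : ℝ) = (n : ℝ) ^ K * n := by
              rw [hik, hkdef, pow_succ]
              push_cast
              ring
            rw [hwdef]
            rw [hcast]; simp only [hik, if_neg hknz, if_pos rfl, if_neg h0, ite_true]
            have hnK : ((n : ℝ) ^ K) ≠ 0 := by positivity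
            field_simp
            ring
          · simp [hwdef, h0, hk2]
      have hsum : ∑ i ∈ Finset.range (k + 1), ((n ^ i : ℕ) : ℝ) * w ⟨i, 0⟩
          = 2 * (n : ℝ) * (k : ℝ)⁻¹ := by
        rw [Finset.sum_congr rfl hsplit, Finset.sum_add_distrib,
          Finset.sum_ite_eq' (Finset.range (k + 1)) (0 : ℕ) (fun _ => (n : ℝ) * (k : ℝ)⁻¹),
          Finset.sum_ite_eq' (Finset.range (k + 1)) k (fun _ => (n : ℝ) * (k : ℝ)⁻¹),
          if_pos (Finset.mem_range.mpr (by omega)),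
          if_pos (Finset.mem_range.mpr (by omega))]
        ring
      rw [hsum]
      have hfin : ((δ : ℝ) ^ p) ^ (1 / p) = δ := by
        rw [← Real.rpow_mul hδ.le]
        have : p * (1 / p) = 1 := by field_simp
        rw [this, Real.rpow_one]
      calc (2 * (n : ℝ) * (k : ℝ)⁻¹) ^ (1 / p) < (δ ^ p) ^ (1 / p) :=
            Real.rpow_lt_rpow (by positivity) hklt hip
      _ = δ := hfin
end
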